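/- There is no finite p-group G of order at most p⁶ with Z(G) not contained in G' and class at least 3 such that Z(Inn(G)) = Autcent_Z(G) < Autcent(G). -/

import Mathlib

variable (G : Type*) [Group G]

/-- The subgroup of inner automorphisms of `G`. -/
def innAut : Subgroup (MulAut G) := (MulAut.conj (G := G)).range

/-- Central automorphisms: those commuting with every inner automorphism. -/
def Autcent : Subgroup (MulAut G) :=
  Subgroup.centralizer (innAut G : Set (MulAut G))

/-- Automorphisms fixing the center elementwise. -/
def fixCenter : Subgroup (MulAut G) where
  carrier := {α | ∀ z ∈ Subgroup.center G, α z = z}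
  one_mem' := fun _ _ => rfl
  mul_mem' := by
    intro a b ha hb z hz
    show a (b z) = z
    rw [hb z hz, ha z hz]
  inv_mem' := by
    intro a ha z hz
    show a⁻¹ z = z
    have h := ha z hz
    have : a.symm (a z) = a.symm z := by rw [h]
    simpa using this.symm

/-- Central automorphisms fixing the center elementwise. -/
def AutcentZ : Subgroup (MulAut G) := Autcent G ⊓ fixCenter G

/-- The center of the inner automorphism group, as a subgroup of `MulAut G`. -/
def ZInn : Subgroup (MulAut G) :=
  innAut G ⊓ Subgroup.centralizer (innAut G : Set (MulAut G))

/-!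
Every homomorphism `φ : G ⧸ G'Z(G) → Z(G)` gives an automorphism `x ↦ x φ(x)` in
`Autcent_Z(G)`. If all of them are inner, every value of every such `φ` is a commutator;
since `Z(G) ⊄ G'`, some `z ∈ Z(G)` then has order larger than the exponent of `G ⧸ G'Z(G)`.
Duality for finite abelian groups turns this into `p² ≤ |Z(G)|` and
`|G : G'Z(G)| ≤ |Hom(G ⧸ G'Z(G), Z(G))| ≤ |Z(Inn G)|`. So `P = G ⧸ Z(G)` is nonabelian of
order at most `p⁴` with `|P : P'| ≤ |Z(P)|`, which is impossible: by Burnside's basis theorem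
`|P : P'| ≥ p²`, hence `|P : Z(P)| = p²`, hence `|P'| ≤ p`.
-/

open Subgroup
open scoped commutatorElement IsMulCommutative

section ClassTwo

variable {H : Type*} [Group H]

def commutatorRightHom (hc : ∀ a b : H, ⁅a, b⁆ ∈ center H) (a : H) : H →* H where
  toFun b := ⁅a, b⁆
  map_one' := commutatorElement_one_right a
  map_mul' b c := by
    rw [commutatorElement_mul_right_eq_mul_conj, mul_assoc _ b, mem_center_iff.mp (hc a c) b]
    group

theorem commutatorRightHom_apply (hc : ∀ a b : H, ⁅a, b⁆ ∈ center H) (a b : H) :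
    commutatorRightHom hc a b = ⁅a, b⁆ := rfl

theorem commutatorElement_pow_eq_one (hc : ∀ a b : H, ⁅a, b⁆ ∈ center H) {x : H} {n : ℕ}
    (hx : x ^ n ∈ center H) (y : H) :
    ⁅x, y⁆ ^ n = 1 := by
  rw [← commutatorElement_inv, inv_pow, ← commutatorRightHom_apply hc, ← map_pow,
    commutatorRightHom_apply, commutatorElement_eq_one_iff_mul_comm.mpr (mem_center_iff.mp hx y),
    inv_one]

theorem commutator_le_zpowers_commutatorElement (hc : ∀ a b : H, ⁅a, b⁆ ∈ center H)
    {x y : H} (hxy : closure {x, y} ⊔ center H = ⊤) : commutator H ≤ zpowers ⁅x, y⁆ := by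
  set K := zpowers ⁅x, y⁆
  -- `⁅a, ·⁆` is a homomorphism, so membership in `K` only has to be checked on generators.
  have extend : ∀ a : H, ⁅a, x⁆ ∈ K → ⁅a, y⁆ ∈ K → ∀ b, ⁅a, b⁆ ∈ K := by
    intro a hx hy b
    have hle : closure {x, y} ⊔ center H ≤ K.comap (commutatorRightHom hc a) := by
      refine sup_le ((closure_le _).mpr ?_) fun z hz => ?_
      · rintro _ (rfl | rfl) <;> assumption
      · rw [mem_comap, commutatorRightHom_apply,
          commutatorElement_eq_one_iff_mul_comm.mpr (mem_center_iff.mp hz a)]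
        exact one_mem K
    exact hle (hxy ▸ mem_top b)
  have hyx : ⁅y, x⁆ ∈ K := by
    rw [← commutatorElement_inv]
    exact inv_mem (mem_zpowers _)
  have hx := extend x (by simp) (mem_zpowers _)
  have hy := extend y hyx (by simp)
  rw [_root_.commutator_def, commutator_le]
  intro a _ b _
  rw [← commutatorElement_inv, inv_mem_iff]
  exact extend b (commutatorElement_inv x b ▸ inv_mem (hx b))
    (commutatorElement_inv y b ▸ inv_mem (hy b)) a

end ClassTwo

section Frattini

variable {G : Type*} [Group G]

theorem commutator_le_of_isCoatom [Group.IsNilpotent G] {M : Subgroup G} (hM : IsCoatom M) :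
    commutator G ≤ M := by
  have : M.Normal := Group.normalizerCondition_of_isNilpotent.normal_of_coatom M hM
  obtain ⟨g, hg⟩ : ∃ g, g ∉ M := by
    by_contra! h
    exact hM.1 ((eq_top_iff' M).mpr h)
  have hsup : M ⊔ zpowers g = ⊤ :=
    hM.2 _ (lt_of_le_of_ne le_sup_left fun h => hg (h ▸ mem_sup_right (mem_zpowers g)))
  have : IsCyclic (G ⧸ M) := isCyclic_iff_exists_zpowers_eq_top.mpr ⟨g, by
    rw [← QuotientGroup.mk'_apply, ← MonoidHom.map_zpowers, ← bot_sup_eq (map _ _),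
      ← QuotientGroup.map_mk'_self M, ← Subgroup.map_sup, hsup,
      map_top_of_surjective _ (QuotientGroup.mk'_surjective M)]⟩
  simpa using Abelianization.commutator_subset_ker (QuotientGroup.mk' M)

theorem commutator_le_frattini [Group.IsNilpotent G] : commutator G ≤ frattini G :=
  le_iInf₂ fun _ hM => commutator_le_of_isCoatom hM

theorem isCyclic_of_isCyclic_abelianization [Finite G] [Group.IsNilpotent G]
    [IsCyclic (Abelianization G)] : IsCyclic G := by
  obtain ⟨q, hq⟩ := isCyclic_iff_exists_zpowers_eq_top.mp ‹IsCyclic (Abelianization G)›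
  obtain ⟨g, rfl⟩ := QuotientGroup.mk_surjective q
  have hsup : zpowers g ⊔ commutator G = ⊤ := by
    rw [← Abelianization.ker_of, ← comap_map_eq, MonoidHom.map_zpowers]
    exact (congrArg (comap _) hq).trans (comap_top _)
  exact isCyclic_iff_exists_zpowers_eq_top.mpr
    ⟨g, frattini_nongenerating (eq_top_mono (sup_le_sup_left commutator_le_frattini _) hsup)⟩

end Frattini

section PGroup

variable {p : ℕ} [Fact p.Prime] {H : Type*} [Group H] [Finite H]

theorem IsPGroup.isCyclic_of_card_lt_prime_sq (hH : IsPGroup p H) (h : Nat.card H < p ^ 2) :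
    IsCyclic H := by
  have hp : p.Prime := Fact.out
  obtain ⟨k, hk⟩ := IsPGroup.iff_card.mp hH
  have hk1 : k ≤ 1 := by
    by_contra! hk1
    exact h.not_ge (hk ▸ Nat.pow_le_pow_right hp.pos hk1)
  exact isCyclic_of_card_dvd_prime (hk ▸ pow_one p ▸ Nat.pow_dvd_pow p hk1)

theorem IsPGroup.prime_sq_le_card_quotient_center (hH : IsPGroup p H)
    (hnc : ¬ IsMulCommutative H) : p ^ 2 ≤ Nat.card (H ⧸ center H) := by
  by_contra! h
  have := (hH.to_quotient _).isCyclic_of_card_lt_prime_sq h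
  exact hnc (isMulCommutative_of_isCyclic_quotient_center_self H)

theorem IsPGroup.pow_eq_one_of_card_eq_prime_sq (hH : IsPGroup p H)
    (hcard : Nat.card H = p ^ 2) (hnc : ¬ IsCyclic H) (x : H) : x ^ p = 1 := by
  have hp : p.Prime := Fact.out
  obtain ⟨k, hk⟩ := IsPGroup.iff_orderOf.mp hH x
  have hk2 : k < 2 := by
    have hdvd : p ^ k ∣ p ^ 2 := hk ▸ hcard ▸ orderOf_dvd_natCard x
    refine lt_of_le_of_ne ((Nat.pow_dvd_pow_iff_le_right hp.one_lt).mp hdvd) ?_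
    rintro rfl
    exact hnc (isCyclic_of_orderOf_eq_card x (hk.trans hcard.symm))
  rw [← orderOf_dvd_iff_pow_eq_one, hk]
  simpa using Nat.pow_dvd_pow p (Nat.lt_succ_iff.mp hk2)

theorem IsPGroup.exists_closure_pair_eq_top (hH : IsPGroup p H)
    (hcard : Nat.card H = p ^ 2) (hnc : ¬ IsCyclic H) : ∃ x y : H, closure {x, y} = ⊤ := by
  have hp : p.Prime := Fact.out
  have : Nontrivial H := Finite.one_lt_card_iff_nontrivial.mp
    (hcard ▸ Nat.one_lt_pow two_ne_zero hp.one_lt)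
  obtain ⟨x, hx⟩ := exists_ne (1 : H)
  have hxp : orderOf x = p := orderOf_eq_prime (hH.pow_eq_one_of_card_eq_prime_sq hcard hnc x) hx
  obtain ⟨y, hy⟩ : ∃ y, y ∉ zpowers x := by
    by_contra! h
    exact hnc (isCyclic_iff_exists_zpowers_eq_top.mpr ⟨x, (eq_top_iff' _).mpr h⟩)
  refine ⟨x, y, eq_top_of_card_eq _ ?_⟩
  obtain ⟨k, hk⟩ := IsPGroup.iff_card.mp (hH.to_subgroup (closure {x, y}))
  have hxC : zpowers x ≤ closure {x, y} := zpowers_le.mpr (subset_closure (by simp))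
  have hk2 : k ≤ 2 := (Nat.pow_dvd_pow_iff_le_right hp.one_lt).mp
    (hk ▸ hcard ▸ card_subgroup_dvd_card _)
  have hk1 : 1 < k := by
    by_contra! hk1
    refine hy ((eq_of_le_of_card_ge hxC ?_) ▸ subset_closure (by simp) : y ∈ zpowers x)
    rw [hk, Nat.card_zpowers, hxp]
    simpa using Nat.pow_le_pow_right hp.pos hk1
  rw [hk, hcard, show k = 2 by omega]

theorem IsPGroup.prime_sq_le_card_abelianization (hH : IsPGroup p H)
    (hnc : ¬ IsMulCommutative H) : p ^ 2 ≤ Nat.card (Abelianization H) := by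
  by_contra! h
  have := hH.isNilpotent
  have : IsCyclic (Abelianization H) := (hH.to_quotient _).isCyclic_of_card_lt_prime_sq h
  have := isCyclic_of_isCyclic_abelianization (G := H)
  exact hnc inferInstance

theorem IsPGroup.card_commutator_le_prime (hH : IsPGroup p H)
    (h : Nat.card (H ⧸ center H) ≤ p ^ 2) : Nat.card (commutator H) ≤ p := by
  have hp : p.Prime := Fact.out
  by_cases hcyc : IsCyclic (H ⧸ center H)
  · have := isMulCommutative_of_isCyclic_quotient_center_self H
    simpa [commutator_eq_bot] using hp.one_lt.le
  have hQ : IsPGroup p (H ⧸ center H) := hH.to_quotient _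
  have hcard : Nat.card (H ⧸ center H) = p ^ 2 :=
    le_antisymm h (not_lt.mp fun h' => hcyc (hQ.isCyclic_of_card_lt_prime_sq h'))
  have hc : ∀ a b : H, ⁅a, b⁆ ∈ center H := fun a b => by
    have := IsPGroup.isMulCommutative_of_card_eq_prime_sq hcard
    rw [← QuotientGroup.eq_one_iff, ← QuotientGroup.mk'_apply, map_commutatorElement,
      commutatorElement_eq_one_iff_mul_comm]
    exact mul_comm _ _
  obtain ⟨x', y', hxy'⟩ := hQ.exists_closure_pair_eq_top hcard hcyc
  obtain ⟨x, rfl⟩ := QuotientGroup.mk_surjective x'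
  obtain ⟨y, rfl⟩ := QuotientGroup.mk_surjective y'
  have hxy : closure {x, y} ⊔ center H = ⊤ := by
    rw [← QuotientGroup.ker_mk' (center H), ← comap_map_eq, MonoidHom.map_closure,
      Set.image_pair]
    exact (congrArg (comap _) hxy').trans (comap_top _)
  have hxp : x ^ p ∈ center H := by
    rw [← QuotientGroup.eq_one_iff, QuotientGroup.mk_pow]
    exact hQ.pow_eq_one_of_card_eq_prime_sq hcard hcyc _
  calc Nat.card (commutator H) ≤ Nat.card (zpowers ⁅x, y⁆) :=
        card_le_of_le (commutator_le_zpowers_commutatorElement hc hxy)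
    _ ≤ p := by
      rw [Nat.card_zpowers]
      exact orderOf_le_of_pow_eq_one hp.pos (commutatorElement_pow_eq_one hc hxp y)

theorem IsPGroup.card_center_lt_card_abelianization (hH : IsPGroup p H)
    (hnc : ¬ IsMulCommutative H) (hcard : Nat.card H ≤ p ^ 4) :
    Nat.card (center H) < Nat.card (Abelianization H) := by
  have hp : p.Prime := Fact.out
  by_contra! hle
  have h1 : Nat.card H = Nat.card (H ⧸ center H) * Nat.card (center H) :=
    card_eq_card_quotient_mul_card_subgroup _
  have h2 : Nat.card H = Nat.card (Abelianization H) * Nat.card (commutator H) :=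
    card_eq_card_quotient_mul_card_subgroup _
  have hquot : Nat.card (H ⧸ center H) ≤ p ^ 2 := by
    refine Nat.le_of_mul_le_mul_right ?_ (pow_pos hp.pos 2)
    calc Nat.card (H ⧸ center H) * p ^ 2 ≤ Nat.card H :=
          h1 ▸ Nat.mul_le_mul_left _ ((hH.prime_sq_le_card_abelianization hnc).trans hle)
      _ ≤ p ^ 2 * p ^ 2 := by rw [← pow_add]; exact hcard
  have : p ^ 2 * Nat.card (center H) ≤ p * Nat.card (center H) :=
    calc p ^ 2 * Nat.card (center H) ≤ Nat.card H :=
          h1 ▸ Nat.mul_le_mul_right _ (hH.prime_sq_le_card_quotient_center hnc)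
      _ ≤ Nat.card (center H) * p := h2 ▸ Nat.mul_le_mul hle (hH.card_commutator_le_prime hquot)
      _ = p * Nat.card (center H) := mul_comm _ _
  nlinarith [Nat.le_of_mul_le_mul_right this Nat.card_pos, hp.two_le]

end PGroup

section Duality

theorem IsCyclic.hasEnoughRootsOfUnity_of_dvd {C : Type*} [CommGroup C] [IsCyclic C] [Finite C]
    {n : ℕ} (hn : n ∣ Nat.card C) : HasEnoughRootsOfUnity C n where
  prim := by
    obtain ⟨g, hg⟩ := IsCyclic.exists_ofOrder_eq_natCard (α := C)
    obtain ⟨k, hk⟩ := hn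
    exact ⟨g ^ k, (hg ▸ IsPrimitiveRoot.orderOf g).pow Nat.card_pos (hk.trans (mul_comm n k))⟩
  cyc := by
    have : IsCyclic Cˣ :=
      isCyclic_of_surjective (toUnits : C ≃* Cˣ).toMonoidHom toUnits.surjective
    infer_instance

theorem card_le_card_monoidHom_of_exponent_dvd_orderOf {A Z : Type*} [CommGroup A] [Finite A]
    [CommGroup Z] [Finite Z] {z : Z} (h : Monoid.exponent A ∣ orderOf z) :
    Nat.card A ≤ Nat.card (A →* Z) := by
  have : HasEnoughRootsOfUnity (zpowers z) (Monoid.exponent A) :=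
    IsCyclic.hasEnoughRootsOfUnity_of_dvd (by rwa [Nat.card_zpowers])
  have : Finite (A →* Z) := Finite.of_injective _ DFunLike.coe_injective
  calc Nat.card A = Nat.card (A →* (zpowers z)ˣ) :=
        (CommGroup.card_monoidHom_of_hasEnoughRootsOfUnity A _).symm
    _ = Nat.card (A →* zpowers z) :=
        Nat.card_congr (MulEquiv.monoidHomCongrRight toUnits.symm).toEquiv
    _ ≤ Nat.card (A →* Z) :=
        Nat.card_le_card_of_injective (fun φ => (zpowers z).subtype.comp φ)
          fun φ ψ h => MonoidHom.ext fun a => Subtype.ext (DFunLike.congr_fun h a)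

theorem IsPGroup.exists_monoidHom_apply_eq {p : ℕ} [Fact p.Prime] {A Z : Type*}
    [CommGroup A] [Finite A] [Group Z] (hA : IsPGroup p A) {c : Z}
    (hc : c ^ Monoid.exponent A = 1) :
    ∃ (φ : A →* Z) (a : A), φ a = c := by
  classical
  -- In `A ≅ ∏ ℤ/nᵢ`, a factor of maximal order has order divisible by the exponent
  -- (`A` is a `p`-group), so `c` is the image of its generator under some homomorphism.
  obtain ⟨ι, _, n, -, ⟨e⟩⟩ := CommGroup.equiv_prod_multiplicative_zmod_of_finite A
  cases isEmpty_or_nonempty ι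
  · have : Subsingleton A := e.toEquiv.subsingleton
    exact ⟨1, 1, by simpa [Monoid.exp_eq_one_iff.mpr this] using hc.symm⟩
  let u : ι → A := fun i => e.symm (Pi.mulSingle i (Multiplicative.ofAdd 1))
  have hu : ∀ i, orderOf (u i) = n i := fun i => by
    simp [u, orderOf_piMulSingle, orderOf_ofAdd_eq_addOrderOf, ZMod.addOrderOf_one]
  obtain ⟨i, hi⟩ := Finite.exists_max n
  have hdvd : ∀ j, n j ∣ n i := by
    intro j
    obtain ⟨kj, hkj⟩ := IsPGroup.iff_orderOf.mp hA (u j)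
    obtain ⟨ki, hki⟩ := IsPGroup.iff_orderOf.mp hA (u i)
    have hle := hi j
    rw [← hu j, ← hu i, hkj, hki] at hle ⊢
    exact Nat.pow_dvd_pow p ((Nat.pow_le_pow_iff_right (Fact.out : p.Prime).one_lt).mp hle)
  have hexp : Monoid.exponent A ∣ n i := Monoid.exponent_dvd_of_forall_pow_eq_one fun a =>
    e.injective <| funext fun j => by
      rw [map_pow, Pi.pow_apply, ← ofAdd_toAdd (e a j), ← ofAdd_nsmul, nsmul_eq_mul,
        (ZMod.natCast_eq_zero_iff _ _).mpr (hdvd j), zero_mul, map_one, Pi.one_apply, ofAdd_zero]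
  let χ : Multiplicative (ZMod (n i)) →* Z := AddMonoidHom.toMultiplicativeLeft
    (ZMod.lift (n i) ⟨zmultiplesHom (Additive Z) (Additive.ofMul c), by
      obtain ⟨m, hm⟩ := hexp
      rw [zmultiplesHom_apply, natCast_zsmul, ← ofMul_pow, hm, pow_mul, hc, one_pow,
        ofMul_one]⟩)
  refine ⟨χ.comp ((Pi.evalMonoidHom _ i).comp e.toMonoidHom), u i, ?_⟩
  have h1 : (Multiplicative.ofAdd 1 : Multiplicative (ZMod (n i))) =
      .ofAdd ((1 : ℤ) : ZMod (n i)) := by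
    rw [Int.cast_one]
  simp [χ, u, h1, -Int.cast_one, ZMod.lift_coe]

end Duality

section CentralAutomorphisms

/-- `G ⧸ G'Z(G)`, realised as the abelianization of `G ⧸ Z(G)`. -/
abbrev CentralQuotientAb (G : Type*) [Group G] := Abelianization (G ⧸ center G)

def CentralQuotientAb.mk (G : Type*) [Group G] : G →* CentralQuotientAb G :=
  Abelianization.of.comp (QuotientGroup.mk' (center G))

variable {G : Type*} [Group G]

theorem CentralQuotientAb.mk_surjective : Function.Surjective (CentralQuotientAb.mk G) :=
  (QuotientGroup.mk_surjective).comp (QuotientGroup.mk'_surjective _)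

theorem CentralQuotientAb.mk_mul_center (x : G) {z : G} (hz : z ∈ center G) :
    CentralQuotientAb.mk G (x * z) = CentralQuotientAb.mk G x := by
  rw [map_mul, mul_eq_left]
  simp [CentralQuotientAb.mk, (QuotientGroup.eq_one_iff z).mpr hz]

theorem CentralQuotientAb.mk_conj (g x : G) :
    CentralQuotientAb.mk G (g * x * g⁻¹) = CentralQuotientAb.mk G x := by
  rw [map_mul, map_mul, map_inv, mul_inv_cancel_comm]

def centralAut (φ : CentralQuotientAb G →* center G) : MulAut G where
  toFun x := x * φ (CentralQuotientAb.mk G x)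
  invFun x := x * (φ (CentralQuotientAb.mk G x) : G)⁻¹
  left_inv x := by
    simp only [CentralQuotientAb.mk_mul_center x (φ _).2, mul_inv_cancel_right]
  right_inv x := by
    simp only [CentralQuotientAb.mk_mul_center x (inv_mem (φ _).2), inv_mul_cancel_right]
  map_mul' x y := by
    simp only [map_mul, coe_mul]
    rw [mul_assoc x y, ← mul_assoc y, mem_center_iff.mp (φ _).2 y]
    group

theorem centralAut_apply (φ : CentralQuotientAb G →* center G) (x : G) :
    centralAut φ x = x * φ (CentralQuotientAb.mk G x) := rfl

theorem centralAut_mem_autcentZ (φ : CentralQuotientAb G →* center G) :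
    centralAut φ ∈ AutcentZ G := by
  refine ⟨mem_centralizer_iff.mpr ?_, fun z hz => ?_⟩
  · rintro _ ⟨g, rfl⟩
    ext x
    show g * centralAut φ x * g⁻¹ = centralAut φ (g * x * g⁻¹)
    rw [centralAut_apply, centralAut_apply, CentralQuotientAb.mk_conj]
    simp only [mul_assoc, ← mem_center_iff.mp (φ _).2 g⁻¹]
  · simp [centralAut_apply, CentralQuotientAb.mk, (QuotientGroup.eq_one_iff z).mpr hz]

theorem centralAut_injective : Function.Injective (centralAut (G := G)) := by
  intro φ ψ h
  ext x
  exact mul_left_cancel (DFunLike.congr_fun h x)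

theorem coe_mem_commutator_of_zInn_eq_autcentZ (hEq : ZInn G = AutcentZ G)
    (φ : CentralQuotientAb G →* center G) (q : CentralQuotientAb G) :
    (φ q : G) ∈ commutator G := by
  obtain ⟨x, rfl⟩ := CentralQuotientAb.mk_surjective q
  obtain ⟨g, hg⟩ := (hEq ▸ centralAut_mem_autcentZ φ : centralAut φ ∈ ZInn G).1
  have hx : g * x * g⁻¹ = x * φ (CentralQuotientAb.mk G x) := DFunLike.congr_fun hg x
  have : (φ (CentralQuotientAb.mk G x) : G) = ⁅x⁻¹, g⁆ := by
    rw [commutatorElement_def, inv_inv, mul_assoc, mul_assoc, ← mul_assoc g, hx]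
    group
  exact this ▸ commutator_mem_commutator (mem_top _) (mem_top _)

theorem ker_conj : (MulAut.conj : G →* MulAut G).ker = center G := by
  ext g
  simp only [MonoidHom.mem_ker, mem_center_iff, MulEquiv.ext_iff, MulAut.conj_apply,
    MulAut.one_apply, mul_inv_eq_iff_eq_mul]
  exact forall_congr' fun x => eq_comm

theorem card_zInn : Nat.card (ZInn G) = Nat.card (center (G ⧸ center G)) := by
  have e : G ⧸ center G ≃* innAut G :=
    (QuotientGroup.quotientMulEquivOfEq ker_conj.symm).trans
      (QuotientGroup.quotientKerEquivRange _)
  rw [Nat.card_congr (centerCongr e).toEquiv]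
  refine Nat.card_congr
    { toFun := fun b =>
        ⟨⟨b.1, b.2.1⟩, mem_center_iff.mpr fun c => Subtype.ext (b.2.2 c.1 c.2)⟩
      invFun := fun a => ⟨a.1.1, a.1.2,
        fun h hh => congrArg Subtype.val (mem_center_iff.mp a.2 ⟨h, hh⟩)⟩
      left_inv := fun _ => rfl
      right_inv := fun _ => rfl }

theorem card_monoidHom_le_card_zInn [Finite G] (hEq : ZInn G = AutcentZ G) :
    Nat.card (CentralQuotientAb G →* center G) ≤ Nat.card (ZInn G) := by
  rw [hEq]
  exact Nat.card_le_card_of_injective (fun φ => ⟨centralAut φ, centralAut_mem_autcentZ φ⟩)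
    fun φ ψ h => centralAut_injective (congrArg Subtype.val h)

end CentralAutomorphisms

section Counting

variable {p : ℕ} [Fact p.Prime] {G : Type*} [Group G] [Finite G]

theorem exponent_mul_dvd_orderOf_of_zInn_eq_autcentZ (hG : IsPGroup p G)
    (hEq : ZInn G = AutcentZ G)    (z : center G) (hz : (z : G) ∉ commutator G) :
    Monoid.exponent (CentralQuotientAb G) * p ∣ orderOf z := by
  have hp : p.Prime := Fact.out
  have hQ : IsPGroup p (CentralQuotientAb G) := (hG.to_quotient _).to_quotient _
  have hz' : z ^ Monoid.exponent (CentralQuotientAb G) ≠ 1 := fun h => by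
    obtain ⟨φ, q, rfl⟩ := hQ.exists_monoidHom_apply_eq h
    exact hz (coe_mem_commutator_of_zInn_eq_autcentZ hEq φ q)
  obtain ⟨n, hn⟩ := IsPGroup.iff_card.mp hQ
  obtain ⟨k, -, hk⟩ := (Nat.dvd_prime_pow hp).mp (hn ▸ Group.exponent_dvd_nat_card)
  obtain ⟨m, hm⟩ := IsPGroup.iff_orderOf.mp (hG.to_subgroup _) z
  rw [hk, hm, ← pow_succ]
  refine Nat.pow_dvd_pow p (Nat.succ_le_of_lt (not_le.mp fun hmk => hz' ?_))
  rw [← orderOf_dvd_iff_pow_eq_one, hm, hk]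
  exact Nat.pow_dvd_pow p hmk

theorem card_abelianization_le_card_center_of_zInn_eq_autcentZ (hG : IsPGroup p G)
    (hEq : ZInn G = AutcentZ G) (hZ : ¬ center G ≤ commutator G) :
    Nat.card (Abelianization (G ⧸ center G)) ≤ Nat.card (center (G ⧸ center G)) := by
  obtain ⟨z, hzZ, hzG⟩ := SetLike.not_le_iff_exists.mp hZ
  have hdvd := exponent_mul_dvd_orderOf_of_zInn_eq_autcentZ hG hEq ⟨z, hzZ⟩ hzG
  calc _ ≤ Nat.card (CentralQuotientAb G →* center G) :=
        card_le_card_monoidHom_of_exponent_dvd_orderOf (dvd_of_mul_right_dvd hdvd)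
    _ ≤ Nat.card (ZInn G) := card_monoidHom_le_card_zInn hEq
    _ = _ := card_zInn

theorem prime_sq_le_card_center_of_zInn_eq_autcentZ (hG : IsPGroup p G)
    (hEq : ZInn G = AutcentZ G) (hZ : ¬ center G ≤ commutator G)
    (hnc : ¬ IsMulCommutative (G ⧸ center G)) : p ^ 2 ≤ Nat.card (center G) := by
  have hp : p.Prime := Fact.out
  obtain ⟨z, hzZ, hzG⟩ := SetLike.not_le_iff_exists.mp hZ
  have hdvd := exponent_mul_dvd_orderOf_of_zInn_eq_autcentZ hG hEq ⟨z, hzZ⟩ hzG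
  have hpQ : p ∣ Nat.card (CentralQuotientAb G) := by
    have hQ := (hG.to_quotient _).prime_sq_le_card_abelianization hnc
    refine ((hG.to_quotient _).to_quotient _).card_eq_or_dvd.resolve_left fun h => ?_
    have h1 : Nat.card (CentralQuotientAb G) = 1 := h
    nlinarith [hp.two_le]
  obtain ⟨g, hg⟩ := exists_prime_orderOf_dvd_card' p hpQ
  refine Nat.le_of_dvd Nat.card_pos (dvd_trans ?_ (hdvd.trans (orderOf_dvd_natCard _)))
  exact pow_two p ▸ mul_dvd_mul_right (hg ▸ Monoid.order_dvd_exponent g) p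

end Counting

/-- There is no finite `p`-group of order at most `p⁶` with `Z(G) ⊄ G'` and
nilpotence class at least 3 such that `Z(Inn(G)) = Autcent_Z(G) < Autcent(G)`. -/
theorem stmt8 {p : ℕ} [Fact p.Prime] {G : Type*} [Group G] [Finite G]
    [Group.IsNilpotent G]
    (hp : IsPGroup p G) (hcard : Nat.card G ≤ p ^ 6)
    (hZ : ¬ Subgroup.center G ≤ commutator G)
    (hcl : 3 ≤ Group.nilpotencyClass G) :
    ¬ (ZInn G = AutcentZ G ∧ AutcentZ G < Autcent G) := by
  rintro ⟨hEq, -⟩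
  have hP : IsPGroup p (G ⧸ center G) := hp.to_quotient _
  have hPnc : ¬ IsMulCommutative (G ⧸ center G) := by
    rw [← Group.IsNilpotent.nilpotencyClass_le_one_iff, Group.nilpotencyClass_quotient_center]
    omega
  have hZG := prime_sq_le_card_center_of_zInn_eq_autcentZ hp hEq hZ hPnc
  have hPcard : Nat.card (G ⧸ center G) ≤ p ^ 4 := by
    refine Nat.le_of_mul_le_mul_right ?_ (pow_pos (Fact.out : p.Prime).pos 2)
    calc _ ≤ Nat.card G :=
          (card_eq_card_quotient_mul_card_subgroup (center G)) ▸ Nat.mul_le_mul_left _ hZG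
      _ ≤ p ^ 4 * p ^ 2 := by rw [← pow_add]; exact hcard
  exact (hP.card_center_lt_card_abelianization hPnc hPcard).not_ge
    (card_abelianization_le_card_center_of_zInn_eq_autcentZ hp hEq hZ)
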